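/- arXiv:quant-ph/0405065 — 4 statements merged into one kernel-verified Lean document; each statement's English description precedes it below -/
import Mathlib

section
/- Let ħ > 0, L > 0, p_max > 0. Let H_s be the set of functions in L²(ℝ, ℂ) vanishing almost everywhere outside [−L/2, L/2], and let H_sb be the set of functions of the form x ↦ 1_{[−L/2,L/2]}(x) · ψ(x), where ψ is bandlimited with band [−p_max, p_max]. Then H_sb is dense in H_s with respect to the L² norm: for every Φ ∈ H_s and every ε > 0 there exists Ψ ∈ H_sb with ‖Ψ − Φ‖_{L²} < ε. -/
set_option maxHeartbeats 1000000

open MeasureTheory Real Set Complex Metric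

noncomputable section


lemma finRestrictIcc (a b : ℝ) : IsFiniteMeasure ((volume : Measure ℝ).restrict (Icc a b)) :=
  ⟨by rw [Measure.restrict_apply_univ, Real.volume_Icc]; exact ENNReal.ofReal_lt_top⟩

lemma finRestrictIoc (a b : ℝ) : IsFiniteMeasure ((volume : Measure ℝ).restrict (Ioc a b)) :=
  ⟨by rw [Measure.restrict_apply_univ, Real.volume_Ioc]; exact ENNReal.ofReal_lt_top⟩

lemma norm_exp_eq_one (hbar p x : ℝ) :
    ‖Complex.exp (Complex.I * p * x / hbar)‖ = 1 := by
  have : Complex.I * p * x / hbar = ((p * x / hbar : ℝ) : ℂ) * Complex.I := by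
    push_cast; ring
  rw [this, Complex.norm_exp_ofReal_mul_I]

lemma norm_exp_eq_one' (hbar p x : ℝ) :
    ‖Complex.exp ((p : ℂ) * (-(Complex.I * x) / hbar))‖ = 1 := by
  have : (p : ℂ) * (-(Complex.I * x) / hbar) = ((-(p * x / hbar) : ℝ) : ℂ) * Complex.I := by
    push_cast; ring
  rw [this, Complex.norm_exp_ofReal_mul_I]

/-- integrability of φ on the band -/
lemma phi_integrableOn {pmax : ℝ} (hpmax : 0 < pmax) {φ : ℝ → ℂ}
    (hφ : MemLp φ 2 ((volume : Measure ℝ).restrict (Icc (-pmax) pmax))) :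
    IntegrableOn φ (Ioc (-pmax) pmax) volume := by
  haveI := finRestrictIcc (-pmax) pmax
  have h : IntegrableOn φ (Icc (-pmax) pmax) volume := hφ.integrable one_le_two
  exact h.mono_set Ioc_subset_Icc_self

lemma band_intervalIntegrable {hbar pmax : ℝ} (hpmax : 0 < pmax) {φ : ℝ → ℂ}
    (hφ : MemLp φ 2 ((volume : Measure ℝ).restrict (Icc (-pmax) pmax))) (x : ℝ) :
    IntervalIntegrable (fun p => φ p * Complex.exp (Complex.I * p * x / hbar))
      volume (-pmax) pmax := by
  rw [intervalIntegrable_iff_integrableOn_Ioc_of_le (by linarith)]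
  have h := (phi_integrableOn hpmax hφ).bdd_mul
    ((Complex.continuous_exp.comp (by continuity)).aestronglyMeasurable :
      AEStronglyMeasurable (fun p : ℝ => Complex.exp (Complex.I * p * x / hbar)) _)
    (Filter.Eventually.of_forall fun p => le_of_eq (norm_exp_eq_one hbar p x))
  exact h.congr (Filter.Eventually.of_forall fun p => mul_comm _ _)




lemma psi_cont {hbar pmax : ℝ} (hpmax : 0 < pmax) {φ : ℝ → ℂ}
    (hφint : IntegrableOn φ (Ioc (-pmax) pmax) volume) :
    Continuous fun x : ℝ => ∫ p in Ioc (-pmax) pmax, φ p * Complex.exp (Complex.I * p * x / hbar) := by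
  apply continuous_of_dominated (bound := fun p => ‖φ p‖)
  · intro x
    exact hφint.1.mul (Complex.continuous_exp.comp (by continuity)).aestronglyMeasurable
  · intro x
    refine Filter.Eventually.of_forall fun p => ?_
    have : Complex.I * p * x / hbar = ((p * x / hbar : ℝ) : ℂ) * Complex.I := by push_cast; ring
    rw [this, norm_mul, Complex.norm_exp_ofReal_mul_I,
      mul_one]
  · exact hφint.norm
  · refine Filter.Eventually.of_forall fun p => ?_
    exact continuous_const.mul (Complex.continuous_exp.comp (by continuity))

lemma memLp_indicator_of_continuous (a b : ℝ) (ψ : ℝ → ℂ) (h : Continuous ψ) :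
    MemLp ((Icc a b).indicator ψ) 2 (volume : Measure ℝ) := by
  rw [memLp_indicator_iff_restrict measurableSet_Icc]
  haveI := finRestrictIcc a b
  obtain ⟨C, hC⟩ := (isCompact_Icc (a := a) (b := b)).exists_bound_of_continuousOn
    h.continuousOn
  refine MemLp.of_bound h.aestronglyMeasurable C ?_
  filter_upwards [ae_restrict_mem measurableSet_Icc] with x hx using hC x hx


/-- A function `ψ : ℝ → ℂ` is bandlimited with band `[-pmax, pmax]` (with constant `hbar`)
if it is the inverse Fourier transform of some `L²` function on `[-pmax, pmax]`. -/
def Bandlimited (hbar pmax : ℝ) (ψ : ℝ → ℂ) : Prop :=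
  ∃ φ : ℝ → ℂ, MemLp φ 2 ((volume : Measure ℝ).restrict (Icc (-pmax) pmax)) ∧
    ∀ x : ℝ, ψ x = (1 / Real.sqrt (2 * π * hbar) : ℝ) *
      ∫ p in (-pmax)..pmax, φ p * Complex.exp (Complex.I * p * x / hbar)


lemma bandlimited_zero (hbar pmax : ℝ) : Bandlimited hbar pmax (fun _ => 0) := by
  exact ⟨fun _ => 0, MemLp.zero, fun x => by simp⟩

lemma bandlimited_add {hbar pmax : ℝ} (hpmax : 0 < pmax) {ψ₁ ψ₂ : ℝ → ℂ}
    (h₁ : Bandlimited hbar pmax ψ₁) (h₂ : Bandlimited hbar pmax ψ₂) :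
    Bandlimited hbar pmax (ψ₁ + ψ₂) := by
  obtain ⟨φ₁, hφ₁, e₁⟩ := h₁
  obtain ⟨φ₂, hφ₂, e₂⟩ := h₂
  refine ⟨φ₁ + φ₂, hφ₁.add hφ₂, fun x => ?_⟩
  have h : ∫ p in (-pmax)..pmax, (φ₁ p + φ₂ p) * Complex.exp (Complex.I * p * x / hbar)
      = (∫ p in (-pmax)..pmax, φ₁ p * Complex.exp (Complex.I * p * x / hbar))
      + ∫ p in (-pmax)..pmax, φ₂ p * Complex.exp (Complex.I * p * x / hbar) := by
    rw [← intervalIntegral.integral_add (band_intervalIntegrable hpmax hφ₁ x)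
      (band_intervalIntegrable hpmax hφ₂ x)]
    congr 1; funext p; ring
  simp only [Pi.add_apply]
  rw [e₁ x, e₂ x, h, mul_add]

lemma bandlimited_smul {hbar pmax : ℝ} (hpmax : 0 < pmax) (c : ℂ) {ψ : ℝ → ℂ}
    (h : Bandlimited hbar pmax ψ) : Bandlimited hbar pmax (c • ψ) := by
  obtain ⟨φ, hφ, e⟩ := h
  refine ⟨c • φ, hφ.const_smul c, fun x => ?_⟩
  have h : ∫ p in (-pmax)..pmax, (c * φ p) * Complex.exp (Complex.I * p * x / hbar)
      = c * ∫ p in (-pmax)..pmax, φ p * Complex.exp (Complex.I * p * x / hbar) := by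
    rw [← intervalIntegral.integral_const_mul]
    congr 1; funext p; ring
  simp only [Pi.smul_apply, smul_eq_mul]
  rw [e x, h]
  ring

lemma bandlimited_continuous {hbar pmax : ℝ} (hpmax : 0 < pmax) {ψ : ℝ → ℂ}
    (h : Bandlimited hbar pmax ψ) : Continuous ψ := by
  obtain ⟨φ, hφ, e⟩ := h
  have : ψ = fun x : ℝ => ((1 / Real.sqrt (2 * π * hbar) : ℝ) : ℂ) *
      ∫ p in Ioc (-pmax) pmax, φ p * Complex.exp (Complex.I * (p : ℂ) * (x : ℂ) / hbar) := by
    funext x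
    rw [e x, ← intervalIntegral.integral_of_le (by linarith : -pmax ≤ pmax)]
  rw [this]
  exact continuous_const.mul (psi_cont hpmax (phi_integrableOn hpmax hφ))


lemma fubini_step {hbar L pmax : ℝ} (hhbar : 0 < hbar) (hL : 0 < L) (hpmax : 0 < pmax)
    {v : ℝ → ℂ} (hv : MemLp v 2 ((volume : Measure ℝ).restrict (Ioc (-(L/2)) (L/2))))
    {φ : ℝ → ℂ} (hφ : MemLp φ 2 ((volume : Measure ℝ).restrict (Icc (-pmax) pmax))) :
    (∫ x in Ioc (-(L/2)) (L/2), (starRingEnd ℂ)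
        ((1 / Real.sqrt (2 * π * hbar) : ℝ) *
          ∫ p in (-pmax)..pmax, φ p * Complex.exp (Complex.I * p * x / hbar)) * v x)
      = ((1 / Real.sqrt (2 * π * hbar) : ℝ) : ℂ) *
        ∫ p in Ioc (-pmax) pmax, (starRingEnd ℂ) (φ p) *
          ∫ x in Ioc (-(L/2)) (L/2), Complex.exp ((p : ℂ) * (-(Complex.I * x) / hbar)) * v x := by
  haveI := finRestrictIoc (-(L/2)) (L/2)
  haveI := finRestrictIoc (-pmax) pmax
  set c₀ : ℂ := ((1 / Real.sqrt (2 * π * hbar) : ℝ) : ℂ) with hc₀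
  set μs := (volume : Measure ℝ).restrict (Ioc (-(L/2)) (L/2)) with hμs
  set μb := (volume : Measure ℝ).restrict (Ioc (-pmax) pmax) with hμb
  have hconj : ∀ x : ℝ, (starRingEnd ℂ)
      (c₀ * ∫ p in (-pmax)..pmax, φ p * Complex.exp (Complex.I * p * x / hbar))
      = c₀ * ∫ p, (starRingEnd ℂ) (φ p) *
          Complex.exp ((p : ℂ) * (-(Complex.I * x) / hbar)) ∂μb := by
    intro x
    rw [map_mul, Complex.conj_ofReal,
      intervalIntegral.integral_of_le (by linarith : -pmax ≤ pmax), ← integral_conj]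
    refine congrArg (c₀ * ·) (integral_congr_ae (Filter.Eventually.of_forall fun p => ?_))
    dsimp only
    rw [map_mul, ← Complex.exp_conj]
    congr 1
    simp only [map_div₀, map_mul, Complex.conj_I, Complex.conj_ofReal]
    ring
  -- integrability on product for the swap
  have hv_int : Integrable v μs := hv.integrable one_le_two
  have hφ_int : Integrable φ μb := phi_integrableOn hpmax hφ
  have hmono : μb ≤ (volume : Measure ℝ).restrict (Icc (-pmax) pmax) :=
    Measure.restrict_mono Ioc_subset_Icc_self le_rfl
  have m1 : AEStronglyMeasurable (fun z : ℝ × ℝ => (starRingEnd ℂ) (φ z.2)) (μs.prod μb) :=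
    Complex.continuous_conj.comp_aestronglyMeasurable
      ((hφ.1.mono_measure hmono).comp_quasiMeasurePreserving Measure.quasiMeasurePreserving_snd)
  have m2 : AEStronglyMeasurable
      (fun z : ℝ × ℝ => Complex.exp ((z.2 : ℂ) * (-(Complex.I * z.1) / hbar))) (μs.prod μb) :=
    (Complex.continuous_exp.comp (((Complex.continuous_ofReal.comp continuous_snd).mul
      (((continuous_const.mul (Complex.continuous_ofReal.comp continuous_fst)).neg).div_const
        _)))).aestronglyMeasurable
  have m3 : AEStronglyMeasurable (fun z : ℝ × ℝ => v z.1) (μs.prod μb) :=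
    hv.1.comp_quasiMeasurePreserving Measure.quasiMeasurePreserving_fst
  have hint : Integrable (Function.uncurry fun (x p : ℝ) =>
      ((starRingEnd ℂ) (φ p) * Complex.exp ((p : ℂ) * (-(Complex.I * (x : ℂ)) / hbar))) * v x)
      (μs.prod μb) := by
    refine Integrable.mono' (g := fun z : ℝ × ℝ => ‖v z.1‖ * ‖φ z.2‖)
      (hv_int.norm.mul_prod hφ_int.norm) ((m1.mul m2).mul m3) ?_
    refine Filter.Eventually.of_forall fun z => ?_
    simp only [Function.uncurry]
    rw [norm_mul, norm_mul, RCLike.norm_conj, norm_exp_eq_one' hbar z.2 z.1, mul_one]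
    exact le_of_eq (mul_comm _ _)
  have hswap := integral_integral_swap (f := fun (x p : ℝ) =>
      ((starRingEnd ℂ) (φ p) * Complex.exp ((p : ℂ) * (-(Complex.I * (x : ℂ)) / hbar))) * v x) hint
  calc
    (∫ x, (starRingEnd ℂ)
        (c₀ * ∫ p in (-pmax)..pmax, φ p * Complex.exp (Complex.I * p * x / hbar)) * v x ∂μs)
        = ∫ x, c₀ * ∫ p, ((starRingEnd ℂ) (φ p) *
            Complex.exp ((p : ℂ) * (-(Complex.I * x) / hbar))) * v x ∂μb ∂μs := by
          refine integral_congr_ae (Filter.Eventually.of_forall fun x => ?_)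
          dsimp only
          rw [hconj x, mul_assoc, ← integral_mul_const]
    _ = c₀ * ∫ x, ∫ p, ((starRingEnd ℂ) (φ p) *
            Complex.exp ((p : ℂ) * (-(Complex.I * x) / hbar))) * v x ∂μb ∂μs :=
          integral_const_mul _ _
    _ = c₀ * ∫ p, ∫ x, ((starRingEnd ℂ) (φ p) *
            Complex.exp ((p : ℂ) * (-(Complex.I * x) / hbar))) * v x ∂μs ∂μb := by
          rw [hswap]
    _ = c₀ * ∫ p, (starRingEnd ℂ) (φ p) *
          ∫ x, Complex.exp ((p : ℂ) * (-(Complex.I * x) / hbar)) * v x ∂μs ∂μb := by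
          congr 1
          refine integral_congr_ae (Filter.Eventually.of_forall fun p => ?_)
          dsimp only
          rw [← integral_const_mul]
          refine integral_congr_ae (Filter.Eventually.of_forall fun x => ?_)
          ring


lemma G_differentiable {hbar a b : ℝ} (hhbar : 0 < hbar) {v : ℝ → ℂ}
    (hv : IntegrableOn v (Ioc a b) volume) :
    Differentiable ℂ fun z : ℂ =>
      ∫ x in Ioc a b, Complex.exp (z * (-(Complex.I * (x : ℂ)) / hbar)) * v x := by
  set M := max |a| |b| with hM
  have hM0 : 0 ≤ M / hbar := by positivity
  set d : ℝ → ℂ := fun x => -(Complex.I * (x : ℂ)) / (hbar : ℂ) with hd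
  have hdcont : Continuous d := ((continuous_const.mul Complex.continuous_ofReal).neg).div_const _
  have hdnorm : ∀ x ∈ Ioc a b, ‖d x‖ ≤ M / hbar := by
    intro x hx
    have h1 : ‖d x‖ = |x| / hbar := by
      rw [hd]
      simp only [norm_div, norm_neg, norm_mul, Complex.norm_I, one_mul,
        Complex.norm_real, Real.norm_eq_abs, abs_of_pos hhbar]
    have h2 : |x| ≤ M := abs_le.mpr ⟨le_trans (neg_le_neg (le_max_left |a| |b|))
        (le_trans (neg_abs_le a) hx.1.le),
      hx.2.trans ((le_abs_self b).trans (le_max_right _ _))⟩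
    rw [h1]; gcongr
  have key : ∀ z : ℂ, ∀ x ∈ Ioc a b, ‖Complex.exp (z * d x)‖ ≤ rexp (‖z‖ * (M / hbar)) := by
    intro z x hx
    rw [Complex.norm_exp]
    refine Real.exp_le_exp.2 ((Complex.re_le_norm _).trans ?_)
    rw [norm_mul]
    exact mul_le_mul_of_nonneg_left (hdnorm x hx) (norm_nonneg z)
  intro z₀
  set B : ℝ := rexp ((‖z₀‖ + 1) * (M / hbar)) * (M / hbar) with hB
  have hF_meas : ∀ z : ℂ, AEStronglyMeasurable (fun x : ℝ => Complex.exp (z * d x) * v x)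
      (volume.restrict (Ioc a b)) := fun z =>
    ((Complex.continuous_exp.comp (continuous_const.mul hdcont)).aestronglyMeasurable).mul hv.1
  have hF'_meas : AEStronglyMeasurable
      (fun x : ℝ => (Complex.exp (z₀ * d x) * d x) * v x) (volume.restrict (Ioc a b)) :=
    (((Complex.continuous_exp.comp (continuous_const.mul hdcont)).mul
      hdcont).aestronglyMeasurable).mul hv.1
  have hF_int : Integrable (fun x : ℝ => Complex.exp (z₀ * d x) * v x)
      (volume.restrict (Ioc a b)) := by
    refine Integrable.mono' (hv.norm.const_mul (rexp (‖z₀‖ * (M / hbar)))) (hF_meas z₀) ?_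
    filter_upwards [ae_restrict_mem measurableSet_Ioc] with x hx
    rw [norm_mul]
    exact mul_le_mul_of_nonneg_right (key z₀ x hx) (norm_nonneg _)
  have h_bound : ∀ᵐ x ∂(volume.restrict (Ioc a b)), ∀ z ∈ ball z₀ 1,
      ‖(Complex.exp (z * d x) * d x) * v x‖ ≤ B * ‖v x‖ := by
    filter_upwards [ae_restrict_mem measurableSet_Ioc] with x hx
    intro z hz
    have hz1 : ‖z‖ ≤ ‖z₀‖ + 1 := by
      have h := mem_ball.mp hz
      rw [dist_eq_norm] at h
      have := norm_sub_norm_le z z₀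
      linarith
    rw [norm_mul, norm_mul]
    have hexp : ‖Complex.exp (z * d x)‖ ≤ rexp ((‖z₀‖ + 1) * (M / hbar)) :=
      (key z x hx).trans (Real.exp_le_exp.2 (mul_le_mul_of_nonneg_right hz1 hM0))
    have : ‖Complex.exp (z * d x)‖ * ‖d x‖ ≤ rexp ((‖z₀‖ + 1) * (M / hbar)) * (M / hbar) :=
      mul_le_mul hexp (hdnorm x hx) (norm_nonneg _) (Real.exp_nonneg _)
    exact mul_le_mul_of_nonneg_right this (norm_nonneg _)
  have h_diff : ∀ᵐ x ∂(volume.restrict (Ioc a b)), ∀ z ∈ ball z₀ 1,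
      HasDerivAt (fun z : ℂ => Complex.exp (z * d x) * v x)
        ((Complex.exp (z * d x) * d x) * v x) z := by
    refine Filter.Eventually.of_forall fun x => fun z _ => ?_
    simpa using (((hasDerivAt_id z).mul_const (d x)).cexp).mul_const (v x)
  have main := hasDerivAt_integral_of_dominated_loc_of_deriv_le
    (F := fun (z : ℂ) (x : ℝ) => Complex.exp (z * d x) * v x)
    (F' := fun (z : ℂ) (x : ℝ) => (Complex.exp (z * d x) * d x) * v x)
    (bound := fun x => B * ‖v x‖) (ball_mem_nhds z₀ zero_lt_one)
    (Filter.Eventually.of_forall hF_meas) hF_int hF'_meas h_bound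
    (hv.norm.const_mul B) h_diff
  exact main.2.differentiableAt


lemma G_eq_zero {pmax : ℝ} (hpmax : 0 < pmax) {G : ℂ → ℂ} (hG : Differentiable ℂ G)
    (hzero : ∀ᵐ p : ℝ ∂((volume : Measure ℝ).restrict (Ioc (-pmax) pmax)), G ↑p = 0) :
    ∀ z : ℂ, G z = 0 := by
  have hanal : AnalyticOnNhd ℂ G univ := hG.differentiableOn.analyticOnNhd isOpen_univ
  have hfreq : ∃ᶠ z in nhdsWithin (0 : ℂ) {(0 : ℂ)}ᶜ, G z = 0 := by
    rw [Filter.frequently_iff]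
    intro U hU
    rcases Metric.mem_nhdsWithin_iff.1 hU with ⟨ε, εpos, hsub⟩
    set δ := min ε pmax with hδ
    have hδpos : 0 < δ := lt_min εpos hpmax
    have hsubset : Ioo 0 δ ⊆ Ioc (-pmax) pmax := fun p hp =>
      ⟨lt_trans (by linarith) hp.1, hp.2.le.trans (min_le_right _ _)⟩
    have hae : ∀ᵐ p : ℝ ∂((volume : Measure ℝ).restrict (Ioo 0 δ)), G ↑p = 0 :=
      ae_restrict_of_ae_restrict_of_subset hsubset hzero
    have hne : ((volume : Measure ℝ).restrict (Ioo 0 δ)) ≠ 0 := by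
      rw [Ne, Measure.restrict_eq_zero, Real.volume_Ioo]
      simpa using hδpos
    haveI : (ae ((volume : Measure ℝ).restrict (Ioo 0 δ))).NeBot := ae_neBot.mpr hne
    obtain ⟨p, hGp, hp⟩ := (hae.and (ae_restrict_mem measurableSet_Ioo)).exists
    refine ⟨(p : ℂ), hsub ⟨?_, ?_⟩, hGp⟩
    · rw [mem_ball, dist_zero_right, Complex.norm_real]
      calc |p| = p := abs_of_pos hp.1
      _ < δ := hp.2
      _ ≤ ε := min_le_left _ _
    · exact fun h => hp.1.ne' (by exact_mod_cast (mem_singleton_iff.mp h))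
  have heq := hanal.eqOn_zero_of_preconnected_of_frequently_eq_zero
    isPreconnected_univ (mem_univ (0 : ℂ)) hfreq
  exact fun z => heq (mem_univ z)


lemma ae_zero_of_fourier {T a : ℝ} (hT : 0 < T) {v : ℝ → ℂ}
    (hsm : StronglyMeasurable v)
    (hv : MemLp v 2 ((volume : Measure ℝ).restrict (Ioc a (a + T))))
    (hcoef : ∀ n : ℤ,
      (∫ x in Ioc a (a + T), (fourier (-n) (x : AddCircle T)) • v x) = 0) :
    v =ᵐ[(volume : Measure ℝ).restrict (Ioc a (a + T))] 0 := by
  haveI : Fact (0 < T) := ⟨hT⟩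
  have hlm : Measurable (AddCircle.liftIoc T a v) := by
    have h : AddCircle.liftIoc T a v
        = (fun y : Ioc a (a + T) => v y) ∘ (AddCircle.measurableEquivIoc T a) := rfl
    rw [h]
    exact (hsm.measurable.comp measurable_subtype_coe).comp
      (AddCircle.measurableEquivIoc T a).measurable
  have hsm_lift : StronglyMeasurable (AddCircle.liftIoc T a v) := hlm.stronglyMeasurable
  have hcomp : (AddCircle.liftIoc T a v) ∘ (QuotientAddGroup.mk : ℝ → AddCircle T)
      =ᵐ[(volume : Measure ℝ).restrict (Ioc a (a + T))] v := by
    filter_upwards [ae_restrict_mem measurableSet_Ioc] with x hx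
    exact AddCircle.liftIoc_coe_apply hx
  have hmk : Measurable (QuotientAddGroup.mk : ℝ → AddCircle T) :=
    AddCircle.measurable_mk'
  have h1 : MemLp (AddCircle.liftIoc T a v) 2 (volume : Measure (AddCircle T)) := by
    rw [← (AddCircle.measurePreserving_mk T a).map_eq,
      memLp_map_measure_iff hsm_lift.aestronglyMeasurable hmk.aemeasurable]
    exact hv.ae_eq hcomp.symm
  have hhaar_eq : (AddCircle.haarAddCircle : Measure (AddCircle T))
      = (ENNReal.ofReal T)⁻¹ • (volume : Measure (AddCircle T)) := by
    rw [AddCircle.volume_eq_smul_haarAddCircle, smul_smul, ENNReal.inv_mul_cancel, one_smul]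
    · exact (ENNReal.ofReal_pos.2 hT).ne'
    · exact ENNReal.ofReal_ne_top
  have h2 : MemLp (AddCircle.liftIoc T a v) 2 AddCircle.haarAddCircle := by
    rw [hhaar_eq]
    exact h1.smul_measure (by simpa using hT)
  set fL := h2.toLp _ with hfL
  have hcoeffL : ∀ n : ℤ, fourierCoeff (⇑fL) n = 0 := by
    intro n
    have he : fourierCoeff (⇑fL) n = fourierCoeff (AddCircle.liftIoc T a v) n := by
      refine integral_congr_ae ?_
      filter_upwards [h2.coeFn_toLp] with t ht
      rw [ht]
    rw [he, fourierCoeff_eq_intervalIntegral _ n a]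
    have h3 : (∫ x in a..(a + T), (fourier (-n) (x : AddCircle T)) • (AddCircle.liftIoc T a v x))
        = ∫ x in Ioc a (a + T), (fourier (-n) (x : AddCircle T)) • v x := by
      rw [intervalIntegral.integral_of_le (by linarith)]
      refine integral_congr_ae ?_
      filter_upwards [ae_restrict_mem measurableSet_Ioc] with x hx
      rw [AddCircle.liftIoc_coe_apply hx]
    rw [h3, hcoef n, smul_zero]
  have hpar := tsum_sq_fourierCoeff fL
  have hzero : ∫ t : AddCircle T, ‖fL t‖ ^ 2 ∂AddCircle.haarAddCircle = 0 := by
    rw [← hpar]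
    simp [hcoeffL]
  have hIntSq : Integrable (fun t => ‖fL t‖ ^ 2) AddCircle.haarAddCircle :=
    (Lp.memLp fL).norm.integrable_sq
  have hae0 : (fun t => ‖fL t‖ ^ 2) =ᵐ[AddCircle.haarAddCircle] 0 :=
    (integral_eq_zero_iff_of_nonneg (fun t => sq_nonneg _) hIntSq).mp hzero
  have hfL0 : ⇑fL =ᵐ[AddCircle.haarAddCircle] 0 := by
    filter_upwards [hae0] with t ht
    have : ‖fL t‖ ^ 2 = 0 := ht
    simpa [pow_eq_zero_iff, norm_eq_zero] using this
  have hlift0 : AddCircle.liftIoc T a v =ᵐ[AddCircle.haarAddCircle] 0 :=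
    h2.coeFn_toLp.symm.trans hfL0
  have hlift0' : AddCircle.liftIoc T a v =ᵐ[(volume : Measure (AddCircle T))] 0 := by
    rw [AddCircle.volume_eq_smul_haarAddCircle]
    exact Measure.ae_smul_measure hlift0 _
  have hback : (AddCircle.liftIoc T a v) ∘ (QuotientAddGroup.mk : ℝ → AddCircle T)
      =ᵐ[(volume : Measure ℝ).restrict (Ioc a (a + T))]
      (0 : AddCircle T → ℂ) ∘ (QuotientAddGroup.mk : ℝ → AddCircle T) := by
    refine ae_eq_comp hmk.aemeasurable ?_
    rw [(AddCircle.measurePreserving_mk T a).map_eq]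
    exact hlift0'
  exact hcomp.symm.trans hback


/-- The truncations to the slit `[-L/2, L/2]` of bandlimited functions are
dense (in `L²` norm) in the space of `L²` functions supported in the slit. -/
theorem truncated_bandlimited_dense_in_slit
    (hbar L pmax : ℝ) (hhbar : 0 < hbar) (hL : 0 < L) (hpmax : 0 < pmax)
    (Φ : ℝ → ℂ) (hΦ : MemLp Φ 2 (volume : Measure ℝ))
    (hsupp : ∀ᵐ x ∂(volume : Measure ℝ), x ∉ Icc (-(L/2)) (L/2) → Φ x = 0)
    (ε : ℝ) (hε : 0 < ε) :
    ∃ ψ : ℝ → ℂ, Bandlimited hbar pmax ψ ∧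
      eLpNorm (fun x => (Icc (-(L/2)) (L/2)).indicator ψ x - Φ x) 2 (volume : Measure ℝ)
        < ENNReal.ofReal ε := by
  classical
  haveI := finRestrictIoc (-(L/2)) (L/2)
  haveI := finRestrictIoc (-pmax) pmax
  haveI := finRestrictIcc (-pmax) pmax
  -- the submodule of truncated bandlimited functions
  set S : Submodule ℂ (Lp ℂ 2 (volume : Measure ℝ)) :=
    { carrier := {f | ∃ ψ : ℝ → ℂ, Bandlimited hbar pmax ψ ∧
        ⇑f =ᵐ[(volume : Measure ℝ)] (Icc (-(L/2)) (L/2)).indicator ψ},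
      add_mem' := by
        rintro f g ⟨ψ₁, hb₁, hf⟩ ⟨ψ₂, hb₂, hg⟩
        refine ⟨ψ₁ + ψ₂, bandlimited_add hpmax hb₁ hb₂, ?_⟩
        filter_upwards [Lp.coeFn_add f g, hf, hg] with x h1 h2 h3
        rw [h1]
        simp only [Pi.add_apply, h2, h3]
        by_cases hx : x ∈ Icc (-(L/2)) (L/2) <;>
          simp [Set.indicator_of_mem, Set.indicator_of_notMem, hx]
      zero_mem' := by
        refine ⟨fun _ => 0, bandlimited_zero hbar pmax, ?_⟩
        filter_upwards [Lp.coeFn_zero (E := ℂ) (p := 2) (μ := (volume : Measure ℝ))] with x h1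
        rw [h1]
        simp
      smul_mem' := by
        rintro c f ⟨ψ, hb, hf⟩
        refine ⟨c • ψ, bandlimited_smul hpmax c hb, ?_⟩
        filter_upwards [Lp.coeFn_smul c f, hf] with x h1 h2
        rw [h1]
        simp only [Pi.smul_apply, h2, smul_eq_mul]
        by_cases hx : x ∈ Icc (-(L/2)) (L/2) <;>
          simp [Set.indicator_of_mem, Set.indicator_of_notMem, hx] } with hSdef
  set Φℒ : Lp ℂ 2 (volume : Measure ℝ) := hΦ.toLp Φ with hΦℒ
  -- main density claim
  have hmem : Φℒ ∈ S.topologicalClosure := by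
    rw [← Submodule.orthogonal_orthogonal_eq_closure, Submodule.mem_orthogonal]
    intro u hu
    have huS : ∀ f ∈ S, inner (𝕜 := ℂ) f u = 0 := (Submodule.mem_orthogonal S u).mp hu
    -- step (†): orthogonality against truncated bandlimited functions
    have horto : ∀ ψ : ℝ → ℂ, Bandlimited hbar pmax ψ →
        (∫ x in Ioc (-(L/2)) (L/2), (starRingEnd ℂ) (ψ x) * u x) = 0 := by
      intro ψ hψ
      have hcont := bandlimited_continuous hpmax hψ
      have hmemi := memLp_indicator_of_continuous (-(L/2)) (L/2) ψ hcont
      have hfS : hmemi.toLp _ ∈ S := ⟨ψ, hψ, hmemi.coeFn_toLp⟩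
      have h0 := huS _ hfS
      rw [L2.inner_def] at h0
      simp only [RCLike.inner_apply] at h0
      have h2 : ∫ a, (starRingEnd ℂ) ((Icc (-(L/2)) (L/2)).indicator ψ a) * u a
          ∂(volume : Measure ℝ) = 0 := by
        rw [← h0]
        refine integral_congr_ae ?_
        filter_upwards [hmemi.coeFn_toLp] with a ha
        rw [ha, mul_comm]
      have h3 : (fun a => (starRingEnd ℂ) ((Icc (-(L/2)) (L/2)).indicator ψ a) * u a)
          = (Icc (-(L/2)) (L/2)).indicator (fun a => (starRingEnd ℂ) (ψ a) * u a) := by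
        funext a
        by_cases hx : a ∈ Icc (-(L/2)) (L/2) <;>
          simp [Set.indicator_of_mem, Set.indicator_of_notMem, hx]
      rw [h3, integral_indicator measurableSet_Icc,
        ← Measure.restrict_congr_set Ioc_ae_eq_Icc] at h2
      exact h2
    -- Membership of u restricted
    have hures : MemLp (⇑u) 2 ((volume : Measure ℝ).restrict (Ioc (-(L/2)) (L/2))) :=
      (Lp.memLp u).restrict _
    have hures_int : IntegrableOn (⇑u) (Ioc (-(L/2)) (L/2)) volume :=
      hures.integrable one_le_two
    -- the analytic function G
    set G : ℂ → ℂ := fun z =>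
      ∫ x in Ioc (-(L/2)) (L/2), Complex.exp (z * (-(Complex.I * (x : ℂ)) / hbar)) * u x
      with hGdef
    have hGdiff : Differentiable ℂ G := G_differentiable hhbar hures_int
    -- orthogonality in Fourier space
    have horto2 : ∀ φ : ℝ → ℂ, MemLp φ 2 ((volume : Measure ℝ).restrict (Icc (-pmax) pmax)) →
        (∫ p in Ioc (-pmax) pmax, (starRingEnd ℂ) (φ p) * G ↑p) = 0 := by
      intro φ hφ
      have hfub := fubini_step hhbar hL hpmax hures hφ
      have hψ : Bandlimited hbar pmax (fun x : ℝ => ((1 / Real.sqrt (2 * π * hbar) : ℝ) : ℂ) *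
          ∫ p in (-pmax)..pmax, φ p * Complex.exp (Complex.I * p * x / hbar)) :=
        ⟨φ, hφ, fun x => rfl⟩
      have h0 : (∫ x in Ioc (-(L/2)) (L/2), (starRingEnd ℂ)
          (((1 / Real.sqrt (2 * π * hbar) : ℝ) : ℂ) *
            ∫ p in (-pmax)..pmax, φ p * Complex.exp (Complex.I * p * x / hbar)) * u x) = 0 :=
        horto _ hψ
      have h1 := hfub.symm.trans h0
      rcases mul_eq_zero.mp h1 with h | h
      · exact absurd h (by
          simp only [ne_eq, Complex.ofReal_eq_zero]
          positivity)
      · exact h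
    -- plug in φ = conj ∘ G gives that G vanishes a.e. on the band
    have hGcont : Continuous fun p : ℝ => G ↑p := hGdiff.continuous.comp Complex.continuous_ofReal
    have hGb : ∀ p : ℝ, ‖G ↑p‖ ≤ ∫ x in Ioc (-(L/2)) (L/2), ‖u x‖ := by
      intro p
      refine (norm_integral_le_integral_norm _).trans ?_
      refine le_of_eq (integral_congr_ae (Filter.Eventually.of_forall fun x => ?_))
      dsimp only
      rw [norm_mul, norm_exp_eq_one' hbar p x, one_mul]
    have hφF : MemLp (fun p : ℝ => G ↑p) 2
        ((volume : Measure ℝ).restrict (Icc (-pmax) pmax)) :=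
      MemLp.of_bound hGcont.aestronglyMeasurable _
        (Filter.Eventually.of_forall fun p => hGb p)
    have hres0 := horto2 _ hφF
    have hsq : ∫ p in Ioc (-pmax) pmax, (‖G ↑p‖ ^ 2 : ℝ) = 0 := by
      have h2 : (∫ p in Ioc (-pmax) pmax, (starRingEnd ℂ) (G ↑p) * G ↑p)
          = ∫ p in Ioc (-pmax) pmax, ((‖G ↑p‖ ^ 2 : ℝ) : ℂ) := by
        refine integral_congr_ae (Filter.Eventually.of_forall fun p => ?_)
        show (starRingEnd ℂ) (G ↑p) * G ↑p = ((‖G ↑p‖ ^ 2 : ℝ) : ℂ)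
        rw [mul_comm, Complex.mul_conj, Complex.normSq_eq_norm_sq]
      have h5 : (∫ p in Ioc (-pmax) pmax, ((‖G ↑p‖ ^ 2 : ℝ) : ℂ))
          = ((∫ p in Ioc (-pmax) pmax, (‖G ↑p‖ ^ 2 : ℝ) : ℝ) : ℂ) := integral_ofReal
      rw [h2, h5, Complex.ofReal_eq_zero] at hres0
      exact hres0
    have hsq_int : IntegrableOn (fun p : ℝ => ‖G ↑p‖ ^ 2) (Ioc (-pmax) pmax) volume :=
      ((hGcont.norm.pow 2)).integrableOn_Ioc
    have hae := (integral_eq_zero_iff_of_nonneg (fun p => sq_nonneg _) hsq_int).mp hsq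
    have hGzero_ae : ∀ᵐ p : ℝ ∂((volume : Measure ℝ).restrict (Ioc (-pmax) pmax)), G ↑p = 0 := by
      filter_upwards [hae] with p hp
      have : ‖G ↑p‖ ^ 2 = 0 := hp
      simpa [pow_eq_zero_iff, norm_eq_zero] using this
    have hGzero : ∀ z : ℂ, G z = 0 := G_eq_zero hpmax hGdiff hGzero_ae
    -- Fourier coefficients of u on the slit vanish
    haveI : Fact (0 < L) := ⟨hL⟩
    have hbarC : (hbar : ℂ) ≠ 0 := Complex.ofReal_ne_zero.2 hhbar.ne'
    have hLC : (L : ℂ) ≠ 0 := Complex.ofReal_ne_zero.2 hL.ne'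
    have hIocEq : Ioc (-(L/2)) (-(L/2) + L) = Ioc (-(L/2)) (L/2) := by
      rw [show -(L/2) + L = L/2 by ring]
    have hcoef : ∀ n : ℤ,
        (∫ x in Ioc (-(L/2)) (-(L/2) + L), (fourier (-n) (x : AddCircle L)) • u x) = 0 := by
      intro n
      rw [hIocEq]
      have hfe : ∀ x : ℝ, (fourier (-n) (x : AddCircle L)) • u x
          = Complex.exp (((2 * π * n * hbar / L : ℝ) : ℂ) * (-(Complex.I * (x : ℂ)) / hbar))
            * u x := by
        intro x
        rw [fourier_coe_apply, smul_eq_mul]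
        congr 1
        have harg : ((↑hbar : ℂ))⁻¹ * (↑hbar : ℂ) = 1 := inv_mul_cancel₀ hbarC
        congr 1
        push_cast
        field_simp
      rw [show (∫ x in Ioc (-(L/2)) (L/2), (fourier (-n) (x : AddCircle L)) • u x)
          = G ((2 * π * n * hbar / L : ℝ) : ℂ) from
        integral_congr_ae (Filter.Eventually.of_forall fun x => hfe x)]
      exact hGzero _
    have hu0 : ⇑u =ᵐ[(volume : Measure ℝ).restrict (Ioc (-(L/2)) (-(L/2) + L))] 0 :=
      ae_zero_of_fourier hL (Lp.stronglyMeasurable u) (by rw [hIocEq]; exact hures) hcoef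
    rw [hIocEq] at hu0
    -- conclude inner product with Φℒ is zero
    have hu00 : ∀ᵐ x ∂(volume : Measure ℝ), x ∈ Ioc (-(L/2)) (L/2) → u x = 0 :=
      ae_imp_of_ae_restrict hu0
    have hsing : ∀ᵐ x : ℝ ∂(volume : Measure ℝ), x ≠ -(L/2) := by
      have h := Real.volume_singleton (a := -(L/2))
      have := measure_eq_zero_iff_ae_notMem.mp h
      filter_upwards [this] with x hx
      simpa using hx
    rw [L2.inner_def]
    simp only [RCLike.inner_apply]
    refine integral_eq_zero_of_ae ?_
    filter_upwards [hsupp, hu00, hsing, hΦ.coeFn_toLp] with x h1 h2 h3 h4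
    show Φℒ x * (starRingEnd ℂ) (u x) = 0
    rw [h4]
    by_cases hx : x ∈ Icc (-(L/2)) (L/2)
    · have hx' : x ∈ Ioc (-(L/2)) (L/2) := ⟨lt_of_le_of_ne hx.1 (Ne.symm h3), hx.2⟩
      rw [h2 hx', map_zero, mul_zero]
    · rw [h1 hx, zero_mul]
  -- extract an ε-approximation
  have hmem' : Φℒ ∈ closure (S : Set (Lp ℂ 2 (volume : Measure ℝ))) := hmem
  rw [Metric.mem_closure_iff] at hmem'
  obtain ⟨g, hgS, hdist⟩ := hmem' ε hε
  obtain ⟨ψ, hbψ, hg⟩ := hgS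
  refine ⟨ψ, hbψ, ?_⟩
  have h1 : eLpNorm (fun x => (Icc (-(L/2)) (L/2)).indicator ψ x - Φ x) 2 (volume : Measure ℝ)
      = eLpNorm (⇑(g - Φℒ)) 2 (volume : Measure ℝ) := by
    refine eLpNorm_congr_ae ?_
    filter_upwards [Lp.coeFn_sub g Φℒ, hg, hΦ.coeFn_toLp] with x ha hb hc
    rw [ha, Pi.sub_apply, hb, hc]
  rw [h1]
  have h2 : eLpNorm (⇑(g - Φℒ)) 2 (volume : Measure ℝ) = ENNReal.ofReal ‖g - Φℒ‖ := by
    rw [Lp.norm_def, ENNReal.ofReal_toReal (Lp.eLpNorm_ne_top _)]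
  rw [h2]
  exact (ENNReal.ofReal_lt_ofReal_iff hε).2
    (by rw [← dist_eq_norm, dist_comm]; exact hdist)


end
end

section
/- Let ħ > 0, L > 0, and let Φ : ℝ → ℂ be continuously differentiable on [−L/2, L/2] with Φ(−L/2) = Φ(L/2) = 0 and ∫_{−L/2}^{L/2} |Φ(x)|² dx = 1. Then for every real number p̄, ∫_{−L/2}^{L/2} |−iħΦ'(x) − p̄ Φ(x)|² dx ≥ (πħ/L)². In particular, the momentum uncertainty Δp of any normalized state confined to a slit of width L with vanishing boundary values is at least πħ/L. -/
open MeasureTheory Real Set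

open Filter Topology

private lemma tendsto_quot_aux {f s : ℝ → ℝ} {e d₁ d₂ c₀ : ℝ} {l : Filter ℝ}
    (hf : Tendsto (slope f e) l (𝓝 d₁)) (hs : Tendsto (slope s e) l (𝓝 d₂))
    (hd₂ : d₂ ≠ 0) (hf0 : Tendsto f l (𝓝 0))
    {c : ℝ → ℝ} (hc : Tendsto c l (𝓝 c₀))
    (hfe : f e = 0) (hse : s e = 0)
    (hne : ∀ᶠ x in l, x ≠ e) :
    Tendsto (fun x => c x / s x * f x ^ 2) l (𝓝 0) := by
  have h1 : Tendsto (fun x => c x * (slope f e x / slope s e x) * f x) l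
      (𝓝 (c₀ * (d₁ / d₂) * 0)) := (hc.mul (hf.div hs hd₂)).mul hf0
  rw [mul_zero] at h1
  refine h1.congr' ?_
  filter_upwards [hne] with x hx
  have hxe : x - e ≠ 0 := sub_ne_zero.mpr hx
  rw [slope_def_field, slope_def_field, hfe, hse, sub_zero, sub_zero,
]
  rw [div_div_div_eq, mul_comm (f x) (x - e), mul_div_mul_left _ _ hxe]
  ring

private lemma wirtinger_real (a b : ℝ) (hab : a < b) (f f' : ℝ → ℝ)
    (hderiv : ∀ x ∈ Icc a b, HasDerivWithinAt f (f' x) (Icc a b) x)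
    (hcont : ContinuousOn f' (Icc a b))
    (ha : f a = 0) (hb : f b = 0) :
    (π / (b - a)) ^ 2 * ∫ x in a..b, (f x) ^ 2 ≤ ∫ x in a..b, (f' x) ^ 2 := by
  have hba : (0:ℝ) < b - a := sub_pos.mpr hab
  set k : ℝ := π / (b - a) with hkdef
  have hk : 0 < k := div_pos Real.pi_pos hba
  have hkba : k * (b - a) = π := div_mul_cancel₀ π (ne_of_gt hba)
  have hf : ContinuousOn f (Icc a b) := fun x hx => (hderiv x hx).continuousWithinAt
  set Q : ℝ → ℝ := fun x => (f' x) ^ 2 - k ^ 2 * (f x) ^ 2 with hQdef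
  have hQcont : ContinuousOn Q (Icc a b) := by
    exact (hcont.pow 2).sub (continuousOn_const.mul (hf.pow 2))
  set s : ℝ → ℝ := fun x => Real.sin (k * x - k * a) with hsdef
  set c : ℝ → ℝ := fun x => Real.cos (k * x - k * a) with hcdef
  set g : ℝ → ℝ := fun x => k * c x / s x * (f x) ^ 2 with hgdef
  set g' : ℝ → ℝ := fun x => -(k ^ 2 / (s x) ^ 2) * (f x) ^ 2
      + 2 * (k * c x / s x) * (f x) * (f' x) with hg'def
  -- positivity of s on Ioo
  have hspos : ∀ x ∈ Ioo a b, 0 < s x := by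
    intro x hx
    apply Real.sin_pos_of_pos_of_lt_pi
    · nlinarith [hx.1]
    · have : k * x - k * a < k * (b - a) := by nlinarith [hx.2]
      linarith [hkba ▸ this]
  -- derivatives of s and c at any point
  have hlin : ∀ x : ℝ, HasDerivAt (fun y => k * y - k * a) k x := by
    intro x
    simpa using ((hasDerivAt_id x).const_mul k).sub_const (k * a)
  have hsderiv : ∀ x : ℝ, HasDerivAt s (c x * k) x := fun x => (hlin x).sin
  have hcderiv : ∀ x : ℝ, HasDerivAt c (-s x * k) x := fun x => (hlin x).cos
  -- derivative of g on Ioo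
  have hgderiv : ∀ x ∈ Ioo a b, HasDerivAt g (g' x) x := by
    intro x hx
    have hsx : 0 < s x := hspos x hx
    have hsxne : s x ≠ 0 := ne_of_gt hsx
    have hmem : Icc a b ∈ 𝓝 x := Icc_mem_nhds hx.1 hx.2
    have hfx : HasDerivAt f (f' x) x :=
      (hderiv x (Ioo_subset_Icc_self hx)).hasDerivAt hmem
    have hsc : s x ^ 2 + c x ^ 2 = 1 := Real.sin_sq_add_cos_sq (k * x - k * a)
    have hw : HasDerivAt (fun y => k * c y / s y) (-(k ^ 2 / (s x) ^ 2)) x := by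
      have := (((hcderiv x).const_mul k).div (hsderiv x) hsxne)
      have hnum : k * (-s x * k) * s x - k * c x * (c x * k) = -k ^ 2 := by
        linear_combination (-k ^ 2) * hsc
      rw [hnum, neg_div] at this
      exact this
    have hfsq : HasDerivAt (fun y => (f y) ^ 2) (2 * f x * f' x) x := by
      simpa [mul_comm, mul_assoc] using hfx.fun_pow 2
    have : HasDerivAt g (-(k ^ 2 / s x ^ 2) * f x ^ 2 + k * c x / s x * (2 * f x * f' x)) x :=
      hw.fun_mul hfsq
    convert this using 1
    simp only [hg'def]
    ring
  -- key pointwise identity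
  have hkey : ∀ x ∈ Ioo a b, g' x ≤ Q x := by
    intro x hx
    have hsx : 0 < s x := hspos x hx
    have hsxne : s x ≠ 0 := ne_of_gt hsx
    have hsc : s x ^ 2 + c x ^ 2 = 1 := Real.sin_sq_add_cos_sq (k * x - k * a)
    have hid : Q x - g' x = (f' x - k * c x / s x * f x) ^ 2 := by
      simp only [hQdef, hg'def]
      field_simp
      linear_combination (-k ^ 2 * f x ^ 2) * hsc
    have h0 : (0:ℝ) ≤ Q x - g' x := hid ▸ sq_nonneg _
    linarith
  -- segment inequality
  have hseg : ∀ u v, u ∈ Ioo a b → v ∈ Ioo a b → u ≤ v →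
      g v - g u ≤ ∫ x in u..v, Q x := by
    intro u v hu hv huv
    have hsub : Icc u v ⊆ Ioo a b := fun x hx =>
      ⟨lt_of_lt_of_le hu.1 hx.1, lt_of_le_of_lt hx.2 hv.2⟩
    have hsub' : Icc u v ⊆ Icc a b := hsub.trans Ioo_subset_Icc_self
    have hscont : Continuous s :=
      Real.continuous_sin.comp ((continuous_const.mul continuous_id).sub continuous_const)
    have hccont : Continuous c :=
      Real.continuous_cos.comp ((continuous_const.mul continuous_id).sub continuous_const)
    have hsne : ∀ x ∈ Icc u v, s x ≠ 0 := fun x hx => ne_of_gt (hspos x (hsub hx))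
    have hwcont : ContinuousOn (fun x => k * c x / s x) (Icc u v) :=
      (continuousOn_const.mul hccont.continuousOn).div hscont.continuousOn hsne
    have hg'c : ContinuousOn g' (Icc u v) := by
      apply ContinuousOn.add
      · exact ((continuousOn_const.div (hscont.continuousOn.pow 2)
          (fun x hx => pow_ne_zero 2 (hsne x hx))).neg).mul ((hf.mono hsub').pow 2)
      · exact (((continuousOn_const.mul hwcont).mul (hf.mono hsub')).mul (hcont.mono hsub'))
    have hQc : ContinuousOn Q (Icc u v) := hQcont.mono hsub'
    have hg'int : IntervalIntegrable g' volume u v := by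
      apply ContinuousOn.intervalIntegrable
      rwa [uIcc_of_le huv]
    have hQint : IntervalIntegrable Q volume u v := by
      apply ContinuousOn.intervalIntegrable
      rwa [uIcc_of_le huv]
    have hftc : ∫ x in u..v, g' x = g v - g u :=
      intervalIntegral.integral_eq_sub_of_hasDerivAt
        (fun x hx => hgderiv x (hsub (by rwa [uIcc_of_le huv] at hx))) hg'int
    rw [← hftc]
    exact intervalIntegral.integral_mono_on huv hg'int hQint (fun x hx => hkey x (hsub hx))
  -- uniform bound on Q
  obtain ⟨C, hC⟩ := isCompact_Icc.exists_bound_of_continuousOn hQcont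
  -- the approximating sequences
  set u : ℕ → ℝ := fun n => a + (b - a) / ((n : ℝ) + 2) with hudef
  set v : ℕ → ℝ := fun n => b - (b - a) / ((n : ℝ) + 2) with hvdef
  have hden : ∀ n : ℕ, (0:ℝ) < (n : ℝ) + 2 := by
    intro n; positivity
  have hdpos : ∀ n : ℕ, 0 < (b - a) / ((n : ℝ) + 2) := fun n => div_pos hba (hden n)
  have hdsmall : ∀ n : ℕ, (b - a) / ((n : ℝ) + 2) ≤ (b - a) / 2 := by
    intro n
    apply div_le_div_of_nonneg_left (le_of_lt hba) (by norm_num) 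
    have : (0:ℝ) ≤ (n:ℝ) := Nat.cast_nonneg n
    linarith
  have hu : ∀ n, u n ∈ Ioo a b := by
    intro n
    constructor
    · simp only [hudef]; linarith [hdpos n]
    · simp only [hudef]; linarith [hdsmall n, hba]
  have hv : ∀ n, v n ∈ Ioo a b := by
    intro n
    constructor
    · simp only [hvdef]; linarith [hdsmall n, hba]
    · simp only [hvdef]; linarith [hdpos n]
  have huv : ∀ n, u n ≤ v n := by
    intro n
    simp only [hudef, hvdef]
    linarith [hdsmall n]
  have hdlim : Tendsto (fun n : ℕ => (b - a) / ((n : ℝ) + 2)) atTop (𝓝 0) :=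
    tendsto_const_nhds.div_atTop
      (tendsto_atTop_add_const_right atTop 2 tendsto_natCast_atTop_atTop)
  have hulim : Tendsto u atTop (𝓝 a) := by
    simpa using tendsto_const_nhds.add hdlim
  have hvlim : Tendsto v atTop (𝓝 b) := by
    simpa using tendsto_const_nhds.sub hdlim
  -- integrability on subintervals
  have hQint' : ∀ x y, x ∈ Icc a b → y ∈ Icc a b → IntervalIntegrable Q volume x y := by
    intro x y hx hy
    apply ContinuousOn.intervalIntegrable
    apply hQcont.mono
    rw [← uIcc_of_le (le_of_lt hab)]
    exact uIcc_subset_uIcc (by rwa [uIcc_of_le (le_of_lt hab)])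
      (by rwa [uIcc_of_le (le_of_lt hab)])
  have humem : ∀ n, u n ∈ Icc a b := fun n => Ioo_subset_Icc_self (hu n)
  have hvmem : ∀ n, v n ∈ Icc a b := fun n => Ioo_subset_Icc_self (hv n)
  have hamem : a ∈ Icc a b := ⟨le_refl a, le_of_lt hab⟩
  have hbmem : b ∈ Icc a b := ⟨le_of_lt hab, le_refl b⟩
  have hsplit : ∀ n, ∫ x in (u n)..(v n), Q x =
      (∫ x in a..b, Q x) - (∫ x in a..(u n), Q x) - (∫ x in (v n)..b, Q x) := by
    intro n
    have e1 := intervalIntegral.integral_add_adjacent_intervals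
      (hQint' a (u n) hamem (humem n)) (hQint' (u n) (v n) (humem n) (hvmem n))
    have e2 := intervalIntegral.integral_add_adjacent_intervals
      (hQint' a (v n) hamem (hvmem n)) (hQint' (v n) b (hvmem n) hbmem)
    linarith
  have htail1 : Tendsto (fun n => ∫ x in a..(u n), Q x) atTop (𝓝 0) := by
    have hbnd : ∀ n : ℕ, ‖∫ x in a..(u n), Q x‖ ≤ C * ((b - a) / ((n:ℝ) + 2)) := by
      intro n
      have hb1 : ‖∫ x in a..(u n), Q x‖ ≤ C * |u n - a| := by
        apply intervalIntegral.norm_integral_le_of_norm_le_const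
        intro x hx
        apply hC
        have : Set.uIoc a (u n) = Set.Ioc a (u n) := uIoc_of_le (le_of_lt (hu n).1)
        rw [this] at hx
        exact ⟨le_of_lt hx.1, le_trans hx.2 (le_of_lt (hu n).2)⟩
      have : |u n - a| = (b - a) / ((n:ℝ) + 2) := by
        simp only [hudef]
        rw [add_sub_cancel_left, abs_of_pos (hdpos n)]
      rwa [this] at hb1
    exact squeeze_zero_norm hbnd (by simpa using tendsto_const_nhds.mul hdlim)
  have htail2 : Tendsto (fun n => ∫ x in (v n)..b, Q x) atTop (𝓝 0) := by
    have hbnd : ∀ n : ℕ, ‖∫ x in (v n)..b, Q x‖ ≤ C * ((b - a) / ((n:ℝ) + 2)) := by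
      intro n
      have hb1 : ‖∫ x in (v n)..b, Q x‖ ≤ C * |b - v n| := by
        apply intervalIntegral.norm_integral_le_of_norm_le_const
        intro x hx
        apply hC
        have : Set.uIoc (v n) b = Set.Ioc (v n) b := uIoc_of_le (le_of_lt (hv n).2)
        rw [this] at hx
        exact ⟨le_trans (le_of_lt (hv n).1) (le_of_lt hx.1), hx.2⟩
      have : |b - v n| = (b - a) / ((n:ℝ) + 2) := by
        simp only [hvdef]
        rw [sub_sub_cancel, abs_of_pos (hdpos n)]
      rwa [this] at hb1
    exact squeeze_zero_norm hbnd (by simpa using tendsto_const_nhds.mul hdlim)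
  -- limit of g at a
  have hIooIcc : Ioo a b ⊆ Icc a b := Ioo_subset_Icc_self
  have hga : Tendsto g (𝓝[Ioo a b] a) (𝓝 0) := by
    apply tendsto_quot_aux (d₁ := f' a) (d₂ := c a * k) (c₀ := k * c a)
    · refine (hasDerivWithinAt_iff_tendsto_slope.mp
        (hderiv a ⟨le_refl a, le_of_lt hab⟩)).mono_left (nhdsWithin_mono a ?_)
      exact fun x hx => ⟨hIooIcc hx, ne_of_gt hx.1⟩
    · refine (hasDerivAt_iff_tendsto_slope.mp (hsderiv a)).mono_left
        (nhdsWithin_mono a ?_)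
      exact fun x hx => ne_of_gt hx.1
    · have hca : c a = 1 := by
        show Real.cos (k * a - k * a) = 1
        rw [sub_self, Real.cos_zero]
      rw [hca]; simpa using ne_of_gt hk
    · have := (hderiv a ⟨le_refl a, le_of_lt hab⟩).continuousWithinAt
      rw [ContinuousWithinAt, ha] at this
      exact this.mono_left (nhdsWithin_mono a hIooIcc)
    · exact ((continuous_const.mul
        (Real.continuous_cos.comp ((continuous_const.mul continuous_id).sub
          continuous_const))).tendsto a).mono_left nhdsWithin_le_nhds
    · exact ha
    · show Real.sin (k * a - k * a) = 0
      rw [sub_self, Real.sin_zero]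
    · exact eventually_mem_nhdsWithin.mono (fun x hx => ne_of_gt hx.1)
  -- limit of g at b
  have hgb : Tendsto g (𝓝[Ioo a b] b) (𝓝 0) := by
    have hkb : k * b - k * a = π := by rw [← hkba]; ring
    apply tendsto_quot_aux (d₁ := f' b) (d₂ := c b * k) (c₀ := k * c b)
    · refine (hasDerivWithinAt_iff_tendsto_slope.mp
        (hderiv b ⟨le_of_lt hab, le_refl b⟩)).mono_left (nhdsWithin_mono b ?_)
      exact fun x hx => ⟨hIooIcc hx, ne_of_lt hx.2⟩
    · refine (hasDerivAt_iff_tendsto_slope.mp (hsderiv b)).mono_left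
        (nhdsWithin_mono b ?_)
      exact fun x hx => ne_of_lt hx.2
    · have hcb : c b = -1 := by
        show Real.cos (k * b - k * a) = -1
        rw [hkb, Real.cos_pi]
      rw [hcb]
      simpa using ne_of_gt hk
    · have := (hderiv b ⟨le_of_lt hab, le_refl b⟩).continuousWithinAt
      rw [ContinuousWithinAt, hb] at this
      exact this.mono_left (nhdsWithin_mono b hIooIcc)
    · exact ((continuous_const.mul
        (Real.continuous_cos.comp ((continuous_const.mul continuous_id).sub
          continuous_const))).tendsto b).mono_left nhdsWithin_le_nhds
    · exact hb
    · show Real.sin (k * b - k * a) = 0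
      rw [hkb, Real.sin_pi]
    · exact eventually_mem_nhdsWithin.mono (fun x hx => ne_of_lt hx.2)
  have hgua : Tendsto (fun n => g (u n)) atTop (𝓝 0) :=
    hga.comp (tendsto_nhdsWithin_of_tendsto_nhds_of_eventually_within u hulim
      (Eventually.of_forall hu))
  have hgvb : Tendsto (fun n => g (v n)) atTop (𝓝 0) :=
    hgb.comp (tendsto_nhdsWithin_of_tendsto_nhds_of_eventually_within v hvlim
      (Eventually.of_forall hv))
  -- conclusion
  have hlhs : Tendsto (fun n => g (v n) - g (u n)) atTop (𝓝 0) := by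
    simpa using hgvb.sub hgua
  have hrhs : Tendsto (fun n => ∫ x in (u n)..(v n), Q x) atTop
      (𝓝 (∫ x in a..b, Q x)) := by
    have : Tendsto (fun n => (∫ x in a..b, Q x) - (∫ x in a..(u n), Q x)
        - (∫ x in (v n)..b, Q x)) atTop (𝓝 ((∫ x in a..b, Q x) - 0 - 0)) :=
      (tendsto_const_nhds.sub htail1).sub htail2
    rw [sub_zero, sub_zero] at this
    exact this.congr (fun n => (hsplit n).symm)
  have hfinal : (0:ℝ) ≤ ∫ x in a..b, Q x :=
    le_of_tendsto_of_tendsto' hlhs hrhs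
      (fun n => hseg (u n) (v n) (hu n) (hv n) (huv n))
  -- unfold Q
  have hint1 : IntervalIntegrable (fun x => (f' x) ^ 2) volume a b := by
    apply ContinuousOn.intervalIntegrable
    rw [uIcc_of_le (le_of_lt hab)]
    exact hcont.pow 2
  have hint2 : IntervalIntegrable (fun x => k ^ 2 * (f x) ^ 2) volume a b := by
    apply ContinuousOn.intervalIntegrable
    rw [uIcc_of_le (le_of_lt hab)]
    exact continuousOn_const.mul (hf.pow 2)
  have hQeq : (∫ x in a..b, Q x)
      = (∫ x in a..b, (f' x) ^ 2) - ∫ x in a..b, k ^ 2 * (f x) ^ 2 :=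
    intervalIntegral.integral_sub hint1 hint2
  have hconst : (∫ x in a..b, k ^ 2 * (f x) ^ 2) = k ^ 2 * ∫ x in a..b, (f x) ^ 2 :=
    intervalIntegral.integral_const_mul _ _
  rw [hQeq, hconst] at hfinal
  linarith

private lemma hasDerivWithinAt_cre {f : ℝ → ℂ} {f' : ℂ} {s : Set ℝ} {x : ℝ}
    (h : HasDerivWithinAt f f' s x) :
    HasDerivWithinAt (fun y => (f y).re) f'.re s x := by
  have := Complex.reCLM.hasFDerivAt.comp_hasDerivWithinAt x h
  simp only [Complex.reCLM_apply] at this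
  exact this

private lemma hasDerivWithinAt_cim {f : ℝ → ℂ} {f' : ℂ} {s : Set ℝ} {x : ℝ}
    (h : HasDerivWithinAt f f' s x) :
    HasDerivWithinAt (fun y => (f y).im) f'.im s x := by
  have := Complex.imCLM.hasFDerivAt.comp_hasDerivWithinAt x h
  simp only [Complex.imCLM_apply] at this
  exact this

private lemma wirtinger_complex (a b : ℝ) (hab : a < b) (ψ ψ' : ℝ → ℂ)
    (hderiv : ∀ x ∈ Icc a b, HasDerivWithinAt ψ (ψ' x) (Icc a b) x)
    (hcont : ContinuousOn ψ' (Icc a b))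
    (ha : ψ a = 0) (hb : ψ b = 0) :
    (π / (b - a)) ^ 2 * ∫ x in a..b, Complex.normSq (ψ x)
      ≤ ∫ x in a..b, Complex.normSq (ψ' x) := by
  have hψc : ContinuousOn ψ (Icc a b) := fun x hx => (hderiv x hx).continuousWithinAt
  have hre := wirtinger_real a b hab (fun x => (ψ x).re) (fun x => (ψ' x).re)
    (fun x hx => hasDerivWithinAt_cre (hderiv x hx))
    (Complex.continuous_re.comp_continuousOn hcont)
    (by simp [ha]) (by simp [hb])
  have him := wirtinger_real a b hab (fun x => (ψ x).im) (fun x => (ψ' x).im)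
    (fun x hx => hasDerivWithinAt_cim (hderiv x hx))
    (Complex.continuous_im.comp_continuousOn hcont)
    (by simp [ha]) (by simp [hb])
  have i1 : IntervalIntegrable (fun x => (ψ x).re ^ 2) volume a b := by
    apply ContinuousOn.intervalIntegrable
    rw [uIcc_of_le hab.le]
    exact (Complex.continuous_re.comp_continuousOn hψc).pow 2
  have i2 : IntervalIntegrable (fun x => (ψ x).im ^ 2) volume a b := by
    apply ContinuousOn.intervalIntegrable
    rw [uIcc_of_le hab.le]
    exact (Complex.continuous_im.comp_continuousOn hψc).pow 2
  have i3 : IntervalIntegrable (fun x => (ψ' x).re ^ 2) volume a b := by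
    apply ContinuousOn.intervalIntegrable
    rw [uIcc_of_le hab.le]
    exact (Complex.continuous_re.comp_continuousOn hcont).pow 2
  have i4 : IntervalIntegrable (fun x => (ψ' x).im ^ 2) volume a b := by
    apply ContinuousOn.intervalIntegrable
    rw [uIcc_of_le hab.le]
    exact (Complex.continuous_im.comp_continuousOn hcont).pow 2
  have e1 : (∫ x in a..b, Complex.normSq (ψ x))
      = (∫ x in a..b, (ψ x).re ^ 2) + ∫ x in a..b, (ψ x).im ^ 2 := by
    rw [← intervalIntegral.integral_add i1 i2]
    apply intervalIntegral.integral_congr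
    intro x _
    simp [Complex.normSq_apply]
    ring
  have e2 : (∫ x in a..b, Complex.normSq (ψ' x))
      = (∫ x in a..b, (ψ' x).re ^ 2) + ∫ x in a..b, (ψ' x).im ^ 2 := by
    rw [← intervalIntegral.integral_add i3 i4]
    apply intervalIntegral.integral_congr
    intro x _
    simp [Complex.normSq_apply]
    ring
  rw [e1, e2]
  nlinarith [hre, him]

/-- For a normalized, continuously differentiable state `Φ` on the slit
`[-L/2, L/2]` with vanishing boundary values, the momentum variance around any `p̄` is at
least `(πħ/L)²`: `∫ |−iħΦ' − p̄Φ|² ≥ (πħ/L)²`. -/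
theorem momentum_uncertainty_lower_bound_on_slit
    (hbar L : ℝ) (hhbar : 0 < hbar) (hL : 0 < L)
    (Φ Φ' : ℝ → ℂ)
    (hderiv : ∀ x ∈ Icc (-(L/2)) (L/2), HasDerivWithinAt Φ (Φ' x) (Icc (-(L/2)) (L/2)) x)
    (hcont : ContinuousOn Φ' (Icc (-(L/2)) (L/2)))
    (hbdry₁ : Φ (-(L/2)) = 0) (hbdry₂ : Φ (L/2) = 0)
    (hnorm : (∫ x in (-(L/2))..(L/2), Complex.normSq (Φ x)) = 1) :
    ∀ pbar : ℝ,
      (π * hbar / L) ^ 2 ≤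
        ∫ x in (-(L/2))..(L/2),
          Complex.normSq (-(Complex.I * hbar) * Φ' x - pbar * Φ x) := by
  intro pbar
  have hab : -(L/2) < L/2 := by linarith
  set d : ℂ := -(Complex.I * ((pbar / hbar : ℝ) : ℂ)) with hddef
  set E : ℝ → ℂ := fun x => Complex.exp (d * x) with hEdef
  have hEderiv : ∀ x : ℝ, HasDerivAt E (d * E x) x := by
    intro x
    have h1 : HasDerivAt (fun y : ℝ => d * (y : ℂ)) d x := by
      simpa using ((hasDerivAt_id ((x : ℝ) : ℂ)).const_mul d).comp_ofReal
    have h2 := h1.cexp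
    rw [mul_comm] at h2
    exact h2
  have hEcont : Continuous E :=
    Complex.continuous_exp.comp (continuous_const.mul Complex.continuous_ofReal)
  have hE1 : ∀ x : ℝ, Complex.normSq (E x) = 1 := by
    intro x
    rw [Complex.normSq_eq_norm_sq, Complex.norm_exp]
    have : (d * (x : ℂ)).re = 0 := by
      simp [hddef]
    rw [this, Real.exp_zero, one_pow]
  set Ψ : ℝ → ℂ := fun x => E x * Φ x with hΨdef
  set Ψ' : ℝ → ℂ := fun x => d * E x * Φ x + E x * Φ' x with hΨ'def
  have hΨderiv : ∀ x ∈ Icc (-(L/2)) (L/2),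
      HasDerivWithinAt Ψ (Ψ' x) (Icc (-(L/2)) (L/2)) x := by
    intro x hx
    exact ((hEderiv x).hasDerivWithinAt).mul (hderiv x hx)
  have hΦc : ContinuousOn Φ (Icc (-(L/2)) (L/2)) :=
    fun x hx => (hderiv x hx).continuousWithinAt
  have hΨ'cont : ContinuousOn Ψ' (Icc (-(L/2)) (L/2)) := by
    exact ((continuousOn_const.mul hEcont.continuousOn).mul hΦc).add
      (hEcont.continuousOn.mul hcont)
  have hΨa : Ψ (-(L/2)) = 0 := by simp [hΨdef, hbdry₁]
  have hΨb : Ψ (L/2) = 0 := by simp [hΨdef, hbdry₂]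
  have hw := wirtinger_complex (-(L/2)) (L/2) hab Ψ Ψ' hΨderiv hΨ'cont hΨa hΨb
  have hnormΨ : (∫ x in (-(L/2))..(L/2), Complex.normSq (Ψ x)) = 1 := by
    rw [← hnorm]
    apply intervalIntegral.integral_congr
    intro x _
    simp [hΨdef, Complex.normSq_mul, hE1 x]
  have hkey : ∀ x : ℝ, Complex.normSq (-(Complex.I * hbar) * Φ' x - pbar * Φ x)
      = hbar ^ 2 * Complex.normSq (Ψ' x) := by
    intro x
    have e1 : Ψ' x = E x * (Φ' x + d * Φ x) := by
      simp only [hΨ'def]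
      ring
    have e2 : -(Complex.I * hbar) * Φ' x - pbar * Φ x
        = (-(Complex.I * hbar)) * (Φ' x + d * Φ x) := by
      have hh : (hbar : ℂ) ≠ 0 := by exact_mod_cast hhbar.ne'
      have hcast : ((pbar / hbar : ℝ) : ℂ) = (pbar : ℂ) / (hbar : ℂ) := by push_cast; ring
      rw [hddef, hcast]
      field_simp
      linear_combination (-(pbar : ℂ) * Φ x) * Complex.I_sq
    rw [e1, e2, Complex.normSq_mul, Complex.normSq_mul, hE1 x, one_mul]
    congr 1
    simp [Complex.normSq_apply]
    ring
  have hintkey : (∫ x in (-(L/2))..(L/2),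
        Complex.normSq (-(Complex.I * hbar) * Φ' x - pbar * Φ x))
      = hbar ^ 2 * ∫ x in (-(L/2))..(L/2), Complex.normSq (Ψ' x) := by
    rw [← intervalIntegral.integral_const_mul]
    apply intervalIntegral.integral_congr
    intro x _
    exact hkey x
  have hLL : L/2 - -(L/2) = L := by ring
  rw [hLL, hnormΨ, mul_one] at hw
  rw [hintkey]
  have hfin : (π * hbar / L) ^ 2 = hbar ^ 2 * (π / L) ^ 2 := by ring
  rw [hfin]
  have h2 : (0:ℝ) ≤ hbar ^ 2 := sq_nonneg hbar
  nlinarith [hw, sq_nonneg hbar]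
end

section
/- Let T be an (N+1)×(N+1) Hermitian positive definite complex matrix with inverse S = T^{−1}, and fix a₁, …, a_N ∈ ℂ. For t ∈ ℂ let a(t) = (a₁, …, a_N, t) ∈ ℂ^{N+1} and f(t) = a(t)† S a(t). Then: (i) S_{N+1,N+1} is real and positive; (ii) f(t) = S_{N+1,N+1} |t − c|² + f(c) where c = −(1/S_{N+1,N+1}) Σ_{r=1}^{N} S_{N+1,r} a_r, so f attains its unique minimum at t = c and grows quadratically in |t − c|; and (iii) the minimum value f(c) equals ã† (T_N)^{−1} ã, where T_N is the leading N×N principal submatrix of T and ã = (a₁, …, a_N). -/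
open Matrix
open scoped ComplexOrder

/-- Let `T` be Hermitian positive definite of size `(N+1)×(N+1)` with inverse
`S`, fix `a ∈ ℂ^N`, and let `f t = a(t)† S a(t)` where `a(t) = (a₁,…,a_N,t)`. Then the
corner entry `S_{N+1,N+1}` is real and positive, `f t = S_{N+1,N+1}|t−c|² + f c` for
`c = −(1/S_{N+1,N+1}) ∑ᵣ S_{N+1,r} aᵣ` (so `f` has its unique minimum at `c`, growing
quadratically), and the minimum value is `f c = ã† (T_N)⁻¹ ã` with `T_N` the leading
principal `N×N` submatrix. -/
theorem adding_constraint_quadratic_norm_cost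
    (N : ℕ) (T : Matrix (Fin (N + 1)) (Fin (N + 1)) ℂ) (hT : T.PosDef)
    (S : Matrix (Fin (N + 1)) (Fin (N + 1)) ℂ) (hS : S = T⁻¹)
    (a : Fin N → ℂ)
    (f : ℂ → ℂ)
    (hf : ∀ t : ℂ, f t =
      star (Fin.snoc a t : Fin (N + 1) → ℂ) ⬝ᵥ S *ᵥ (Fin.snoc a t : Fin (N + 1) → ℂ))
    (c : ℂ)
    (hc : c = -(1 / S (Fin.last N) (Fin.last N)) *
      ∑ r : Fin N, S (Fin.last N) (Fin.castSucc r) * a r) :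
    (S (Fin.last N) (Fin.last N)).im = 0 ∧
    0 < (S (Fin.last N) (Fin.last N)).re ∧
    (∀ t : ℂ, f t = S (Fin.last N) (Fin.last N) * (Complex.normSq (t - c) : ℝ) + f c) ∧
    (∀ t : ℂ, t ≠ c → (f c).re < (f t).re) ∧
    f c = star a ⬝ᵥ (T.submatrix Fin.castSucc Fin.castSucc)⁻¹ *ᵥ a := by
  have hSpd : S.PosDef := hS ▸ hT.inv
  obtain ⟨d, hd⟩ : ∃ d : ℂ, d = S (Fin.last N) (Fin.last N) := ⟨_, rfl⟩
  have hdpos : 0 < d := by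
    rw [hd]
    have := hSpd.dotProduct_mulVec_pos (x := Pi.single (Fin.last N) 1) (by intro h; simpa using congrFun h (Fin.last N))
    simpa [dotProduct, Pi.single_apply, apply_ite] using this
  have hdre : 0 < d.re := by simpa using (Complex.lt_def.mp hdpos).1
  have hdim : d.im = 0 := by simpa using (Complex.lt_def.mp hdpos).2.symm
  have hdne : d ≠ 0 := by
    intro h; rw [h] at hdre; simp at hdre
  have hherm : S.IsHermitian := hSpd.1
  have hswap : ∀ k : Fin N,
      S (Fin.castSucc k) (Fin.last N) = (starRingEnd ℂ) (S (Fin.last N) (Fin.castSucc k)) := by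
    intro k
    rw [← hherm.apply (Fin.last N) (Fin.castSucc k)]
    simp
  have hdconj : (starRingEnd ℂ) d = d := by
    rw [hd]
    simpa using hherm.apply (Fin.last N) (Fin.last N)
  obtain ⟨w, hw⟩ : ∃ w : ℂ, w = ∑ r : Fin N, S (Fin.last N) (Fin.castSucc r) * a r := ⟨_, rfl⟩
  obtain ⟨Q, hQ⟩ : ∃ Q : ℂ, Q = ∑ k : Fin N, ∑ r : Fin N,
      (starRingEnd ℂ) (a k) * S (Fin.castSucc k) (Fin.castSucc r) * a r := ⟨_, rfl⟩
  have hwconj : (starRingEnd ℂ) w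
      = ∑ k : Fin N, (starRingEnd ℂ) (a k) * S (Fin.castSucc k) (Fin.last N) := by
    rw [hw, map_sum]
    refine Finset.sum_congr rfl fun k _ => ?_
    rw [hswap k, _root_.map_mul]
    ring
  have expand : ∀ t : ℂ,
      f t = Q + (starRingEnd ℂ) t * w + t * (starRingEnd ℂ) w + t * (starRingEnd ℂ) t * d := by
    intro t
    rw [hf]
    simp only [dotProduct, mulVec, dotProduct, Pi.star_apply, Fin.sum_univ_castSucc,
      Fin.snoc_castSucc, Fin.snoc_last, RCLike.star_def]
    rw [hwconj, hQ, hw, hd]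
    simp only [mul_add, add_mul, Finset.sum_add_distrib, Finset.mul_sum, Finset.sum_mul]
    have e1 : ∀ k : Fin N, (starRingEnd ℂ) (a k) * (S (Fin.castSucc k) (Fin.last N) * t)
        = t * ((starRingEnd ℂ) (a k) * S (Fin.castSucc k) (Fin.last N)) := fun k => by ring
    have e2 : ∀ k : Fin N, ∀ r : Fin N,
        (starRingEnd ℂ) (a k) * (S (Fin.castSucc k) (Fin.castSucc r) * a r)
        = (starRingEnd ℂ) (a k) * S (Fin.castSucc k) (Fin.castSucc r) * a r := fun k r => by ring
    rw [Finset.sum_congr rfl fun k _ => e1 k,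
      Finset.sum_congr rfl fun k _ => Finset.sum_congr rfl fun r _ => e2 k r]
    ring
  have hcd : c = -(w / d) := by rw [hc, ← hw, ← hd]; ring
  have hfc : f c = Q - (starRingEnd ℂ) w * w / d := by
    rw [expand c, hcd, map_neg, map_div₀, hdconj]
    field_simp
    ring
  have part3 : ∀ t : ℂ, f t = d * (Complex.normSq (t - c) : ℝ) + f c := by
    intro t
    have hns : ((Complex.normSq (t - c) : ℝ) : ℂ) = (t - c) * (starRingEnd ℂ) (t - c) :=
      (Complex.mul_conj _).symm
    rw [expand t, hfc, hns, map_sub, hcd, map_neg, map_div₀, hdconj]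
    field_simp
    ring
  have part4 : ∀ t : ℂ, t ≠ c → (f c).re < (f t).re := by
    intro t ht
    have h := part3 t
    have hns : 0 < Complex.normSq (t - c) := Complex.normSq_pos.mpr (sub_ne_zero.mpr ht)
    have hre : (f t).re = d.re * Complex.normSq (t - c) + (f c).re := by
      rw [h]; simp [Complex.add_re, Complex.mul_re, hdim]
    rw [hre]
    nlinarith
  refine ⟨by rw [← hd]; exact hdim, by rw [← hd]; exact hdre, by rw [← hd]; exact part3,
    part4, ?_⟩
  have hTS : T * S = 1 := by
    rw [hS]
    exact Matrix.mul_nonsing_inv T (isUnit_iff_ne_zero.mpr hT.det_pos.ne')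
  have key : ∀ (k : Fin N) (r : Fin (N + 1)),
      ∑ j : Fin N, T (Fin.castSucc k) (Fin.castSucc j) * S (Fin.castSucc j) r
        = (if (Fin.castSucc k : Fin (N + 1)) = r then 1 else 0)
          - T (Fin.castSucc k) (Fin.last N) * S (Fin.last N) r := by
    intro k r
    have h1 : ∑ j : Fin (N + 1), T (Fin.castSucc k) j * S j r
        = if (Fin.castSucc k : Fin (N + 1)) = r then 1 else 0 := by
      have := congrFun (congrFun hTS (Fin.castSucc k)) r
      simpa [Matrix.mul_apply, Matrix.one_apply] using this
    rw [Fin.sum_univ_castSucc] at h1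
    linear_combination h1
  have hMinv : (T.submatrix Fin.castSucc Fin.castSucc)⁻¹ =
      Matrix.of (fun k r : Fin N =>
        S (Fin.castSucc k) (Fin.castSucc r)
          - S (Fin.castSucc k) (Fin.last N) * S (Fin.last N) (Fin.castSucc r) / d) := by
    apply Matrix.inv_eq_right_inv
    ext k r
    simp only [Matrix.mul_apply, Matrix.submatrix_apply, Matrix.of_apply]
    have hstep : ∀ j : Fin N,
        T (Fin.castSucc k) (Fin.castSucc j) *
          (S (Fin.castSucc j) (Fin.castSucc r)
            - S (Fin.castSucc j) (Fin.last N) * S (Fin.last N) (Fin.castSucc r) / d)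
        = T (Fin.castSucc k) (Fin.castSucc j) * S (Fin.castSucc j) (Fin.castSucc r)
          - (T (Fin.castSucc k) (Fin.castSucc j) * S (Fin.castSucc j) (Fin.last N))
            * (S (Fin.last N) (Fin.castSucc r) / d) := fun j => by ring
    rw [Finset.sum_congr rfl fun j _ => hstep j, Finset.sum_sub_distrib, ← Finset.sum_mul,
      key k (Fin.castSucc r), key k (Fin.last N)]
    have h0 : (if (Fin.castSucc k : Fin (N + 1)) = Fin.last N then (1 : ℂ) else 0) = 0 := by
      simp [(Fin.castSucc_lt_last k).ne]
    have h1 : (if (Fin.castSucc k : Fin (N + 1)) = Fin.castSucc r then (1 : ℂ) else 0)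
        = if k = r then 1 else 0 := by
      simp [Fin.castSucc_inj]
    rw [h0, h1, Matrix.one_apply, ← hd]
    field_simp
    split_ifs <;> ring
  rw [hMinv, hfc]
  simp only [dotProduct, mulVec, Matrix.of_apply, Pi.star_apply, RCLike.star_def]
  have hstep : ∀ k : Fin N,
      (starRingEnd ℂ) (a k) * ∑ r : Fin N,
        (S (Fin.castSucc k) (Fin.castSucc r)
          - S (Fin.castSucc k) (Fin.last N) * S (Fin.last N) (Fin.castSucc r) / d) * a r
      = (∑ r : Fin N, (starRingEnd ℂ) (a k) * S (Fin.castSucc k) (Fin.castSucc r) * a r)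
        - ((starRingEnd ℂ) (a k) * S (Fin.castSucc k) (Fin.last N))
          * (∑ r : Fin N, S (Fin.last N) (Fin.castSucc r) * a r) / d := by
    intro k
    simp only [Finset.mul_sum, Finset.sum_mul, Finset.sum_div, ← Finset.sum_sub_distrib]
    exact Finset.sum_congr rfl fun r _ => by ring
  rw [Finset.sum_congr rfl fun k _ => hstep k, Finset.sum_sub_distrib, ← hw, ← hQ]
  rw [show ∀ x : Fin N → ℂ, ∑ k : Fin N, x k * w / d = (∑ k : Fin N, x k) * w / d from
    fun x => by rw [← Finset.sum_div, ← Finset.sum_mul]]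
  rw [← hwconj]
end

section
/- Let ħ > 0, L > 0, p̄ ∈ ℝ, and let Φ(x) = √(2/L) · cos(πx/L) · e^{i x p̄/ħ}. Then Φ satisfies the Euler–Lagrange boundary value problem for minimal momentum uncertainty on the slit: −ħ² Φ''(x) − iħ μ₁ Φ'(x) + μ₂ Φ(x) = 0 for all x ∈ (−L/2, L/2), with Lagrange multipliers μ₁ = −2p̄ and μ₂ = p̄² − ħ²π²/L², together with the boundary conditions Φ(−L/2) = Φ(L/2) = 0 and the normalization ∫_{−L/2}^{L/2} |Φ(x)|² dx = 1. -/
open Real Set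

lemma keyC (a b p q : ℂ) (z : ℂ) :
    HasDerivAt (fun y : ℂ => Complex.exp (Complex.I * b * y) *
        (p * Complex.cos (a * y) + q * Complex.sin (a * y)))
      (Complex.exp (Complex.I * b * z) *
        ((Complex.I * b * p + a * q) * Complex.cos (a * z)
          + (Complex.I * b * q - a * p) * Complex.sin (a * z))) z := by
  have hlin : ∀ (c : ℂ), HasDerivAt (fun y : ℂ => c * y) c z := by
    intro c
    simpa using (hasDerivAt_id z).const_mul c
  have hexp := (hlin (Complex.I * b)).cexp
  have hcos := (hlin a).ccos
  have hsin := (hlin a).csin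
  have := hexp.mul ((hcos.const_mul p).add (hsin.const_mul q))
  refine this.congr_deriv ?_
  simp only [Pi.add_apply]
  ring

lemma key (a b : ℝ) (p q : ℂ) (x : ℝ) :
    HasDerivAt (fun y : ℝ => Complex.exp (Complex.I * b * y) *
        (p * Complex.cos ((a : ℂ) * y) + q * Complex.sin ((a : ℂ) * y)))
      (Complex.exp (Complex.I * b * x) *
        ((Complex.I * b * p + a * q) * Complex.cos ((a : ℂ) * x)
          + (Complex.I * b * q - a * p) * Complex.sin ((a : ℂ) * x))) x :=
  (keyC a b p q x).comp_ofReal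

set_option maxHeartbeats 2000000 in
/-- The ideal template `Φ(x) = √(2/L) cos(πx/L) e^{ixp̄/ħ}` solves the
Euler–Lagrange boundary value problem `−ħ²Φ'' − iħμ₁Φ' + μ₂Φ = 0` on `(-L/2, L/2)` with
Lagrange multipliers `μ₁ = −2p̄` and `μ₂ = p̄² − ħ²π²/L²`, vanishing boundary values, and
unit `L²` norm on the slit. -/
theorem ideal_template_solves_euler_lagrange
    (hbar L pbar : ℝ) (hhbar : 0 < hbar) (hL : 0 < L)
    (Φ : ℝ → ℂ)
    (hΦ : ∀ x : ℝ, Φ x = (Real.sqrt (2 / L) : ℝ) * (Real.cos (π * x / L) : ℝ) *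
      Complex.exp (Complex.I * x * pbar / hbar))
    (mu₁ mu₂ : ℝ) (hmu₁ : mu₁ = -2 * pbar) (hmu₂ : mu₂ = pbar ^ 2 - hbar ^ 2 * π ^ 2 / L ^ 2) :
    (∀ x ∈ Ioo (-(L/2)) (L/2),
      -(hbar : ℂ) ^ 2 * deriv (deriv Φ) x - Complex.I * hbar * mu₁ * deriv Φ x
        + mu₂ * Φ x = 0) ∧
    Φ (-(L/2)) = 0 ∧ Φ (L/2) = 0 ∧
    (∫ x in (-(L/2))..(L/2), Complex.normSq (Φ x)) = 1 := by
  have hL0 : (L : ℝ) ≠ 0 := hL.ne'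
  have hh0 : (hbar : ℝ) ≠ 0 := hhbar.ne'
  have hLC : (L : ℂ) ≠ 0 := by exact_mod_cast hL0
  have hhC : (hbar : ℂ) ≠ 0 := by exact_mod_cast hh0
  set a : ℝ := π / L with ha
  set b : ℝ := pbar / hbar with hb
  set c : ℂ := ((Real.sqrt (2 / L) : ℝ) : ℂ) with hc
  -- rewrite Φ in the standard form
  have hform : Φ = fun x : ℝ => Complex.exp (Complex.I * b * x) *
      (c * Complex.cos ((a : ℂ) * x) + 0 * Complex.sin ((a : ℂ) * x)) := by
    funext x
    rw [hΦ]
    have h1 : ((Real.cos (π * x / L) : ℝ) : ℂ) = Complex.cos ((a : ℂ) * x) := by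
      rw [Complex.ofReal_cos]
      congr 1
      push_cast [ha]
      field_simp
    have h2 : Complex.I * x * pbar / hbar = Complex.I * b * x := by
      push_cast [hb]
      field_simp
    rw [h1, h2, hc]
    ring
  have hd1 : ∀ x : ℝ, HasDerivAt Φ
      (Complex.exp (Complex.I * b * x) *
        ((Complex.I * b * c) * Complex.cos ((a : ℂ) * x)
          + (- a * c) * Complex.sin ((a : ℂ) * x))) x := by
    intro x
    rw [hform]
    have := key a b c 0 x
    convert this using 1
    ring_nf
  have hderiv : deriv Φ = fun x : ℝ => Complex.exp (Complex.I * b * x) *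
      ((Complex.I * b * c) * Complex.cos ((a : ℂ) * x)
        + ((- a) * c) * Complex.sin ((a : ℂ) * x)) := by
    funext x
    exact (hd1 x).deriv
  have hd2 : ∀ x : ℝ, deriv (deriv Φ) x = Complex.exp (Complex.I * b * x) *
      ((Complex.I * b * (Complex.I * b * c) + a * ((- a) * c)) * Complex.cos ((a : ℂ) * x)
        + (Complex.I * b * ((- a) * c) - a * (Complex.I * b * c)) * Complex.sin ((a : ℂ) * x)) := by
    intro x
    rw [hderiv]
    exact (key a b (Complex.I * b * c) ((- a) * c) x).deriv
  refine ⟨?_, ?_, ?_, ?_⟩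
  · intro x hx
    rw [hd2 x, hderiv, hform, hmu₁, hmu₂]
    simp only
    have hbb : (b : ℂ) = pbar / hbar := by push_cast [hb]; ring
    have haa : (a : ℂ) = π / L := by push_cast [ha]; ring
    rw [hbb, haa]
    push_cast
    field_simp
    ring_nf
    simp only [Complex.I_sq]
    field_simp
    ring
  · rw [hΦ]
    have h0 : Real.cos (π * (-(L/2)) / L) = 0 := by
      rw [show π * (-(L/2)) / L = -(π/2) by field_simp]
      simp
    rw [h0]
    simp
  · rw [hΦ]
    have h0 : Real.cos (π * (L/2) / L) = 0 := by
      rw [show π * (L/2) / L = π/2 by field_simp]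
      simp
    rw [h0]
    simp
  · have hnorm : ∀ x : ℝ, (Complex.normSq (Φ x) : ℝ)
        = 1 / L + Real.cos (2 * π * x / L) / L := by
      intro x
      rw [hΦ]
      have harg : Complex.I * x * pbar / hbar = ((x * pbar / hbar : ℝ) : ℂ) * Complex.I := by
        push_cast; field_simp
      rw [harg]
      rw [map_mul, map_mul]
      rw [Complex.normSq_ofReal, Complex.normSq_ofReal]
      have : Complex.normSq (Complex.exp (((x * pbar / hbar : ℝ) : ℂ) * Complex.I)) = 1 := by
        rw [Complex.normSq_eq_norm_sq, Complex.norm_exp_ofReal_mul_I]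
        norm_num
      rw [this, mul_one]
      have hs : Real.sqrt (2 / L) * Real.sqrt (2 / L) = 2 / L :=
        Real.mul_self_sqrt (by positivity)
      have hcs : Real.cos (π * x / L) * Real.cos (π * x / L) = 1/2 + Real.cos (2 * (π * x / L)) / 2 := by
        rw [← Real.cos_sq]
        ring
      rw [hs, hcs]
      have : 2 * (π * x / L) = 2 * π * x / L := by ring
      rw [this]
      field_simp
    have hint : (∫ x in (-(L/2))..(L/2), (Complex.normSq (Φ x) : ℝ))
        = ∫ x in (-(L/2))..(L/2), (1 / L + Real.cos (2 * π * x / L) / L) := by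
      apply intervalIntegral.integral_congr
      intro x _
      exact hnorm x
    rw [hint]
    have hG : ∀ x ∈ uIcc (-(L/2)) (L/2),
        HasDerivAt (fun y : ℝ => y / L + Real.sin (2 * π * y / L) / (2 * π))
          (1 / L + Real.cos (2 * π * x / L) / L) x := by
      intro x _
      have h1 : HasDerivAt (fun y : ℝ => y / L) (1 / L) x := by
        simpa using (hasDerivAt_id x).div_const L
      have hin : HasDerivAt (fun y : ℝ => 2 * π * y / L) (2 * π / L) x := by
        simpa using ((hasDerivAt_id x).const_mul (2 * π)).div_const L
      have h2 := (hin.sin).div_const (2 * π)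
      have : Real.cos (2 * π * x / L) * (2 * π / L) / (2 * π) = Real.cos (2 * π * x / L) / L := by
        field_simp
      rw [this] at h2
      exact h1.add h2
    have hcont : IntervalIntegrable (fun x : ℝ => 1 / L + Real.cos (2 * π * x / L) / L)
        MeasureTheory.volume (-(L/2)) (L/2) := by
      exact (continuous_const.add
        ((Real.continuous_cos.comp ((continuous_const.mul continuous_id).div_const L)).div_const L)).intervalIntegrable _ _
    rw [intervalIntegral.integral_eq_sub_of_hasDerivAt hG hcont]
    have e1 : 2 * π * (L/2) / L = π := by field_simp
    have e2 : 2 * π * (-(L/2)) / L = -π := by field_simp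
    rw [e1, e2]
    simp [Real.sin_pi]
    field_simp
    ring
end
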